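/- Let $\mathcal{K}$ be a finite simplicial complex and let $T_1, \ldots, T_n$ be a sequence of top-dimensional simplices of $\mathcal{K}$. For $0 \le i \le n$ let $\mathcal{K}_i$ denote the subcomplex obtained from $\mathcal{K}$ by deleting the simplices $T_1, \ldots, T_i$ (retaining every face of a deleted simplex that is a face of some remaining simplex). Suppose that for every $i \in \{1, \ldots, n\}$ the subcomplex $\mathcal{K}_i \cap \bar T_i$ (the intersection of the closure of $T_i$ with the complex remaining after its removal) is acyclic. Then for every degree $m$, the reduced homology groups $\tilde H_m(\mathcal{K}_n)$ and $\tilde H_m(\mathcal{K})$ are isomorphic. -/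

import Mathlib

open Finsupp

/-- The `i`-th smallest vertex of the finite set `s` (junk value `0` if out of range). -/
noncomputable def nthVertex (s : Finset ℕ) (i : ℕ) : ℕ := (s.sort (· ≤ ·)).getD i 0

/-- The augmented simplicial boundary of the single simplex `s`:
`∂ s = ∑ᵢ (-1)^i (s minus its i-th vertex)`.  For a vertex `{v}` this gives the chain
supported on `∅`, so we work with the augmented chain complex and its homology is
reduced homology. -/
noncomputable def simplexBoundary (s : Finset ℕ) : Finset ℕ →₀ ℤ :=
  ∑ i ∈ Finset.range s.card, Finsupp.single (s.erase (nthVertex s i)) ((-1 : ℤ) ^ i)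

/-- The (augmented) boundary operator on simplicial chains with `ℤ` coefficients. -/
noncomputable def simpBnd : (Finset ℕ →₀ ℤ) →ₗ[ℤ] (Finset ℕ →₀ ℤ) :=
  Finsupp.lsum ℤ fun s => LinearMap.toSpanSingleton ℤ _ (simplexBoundary s)

/-- The group of `n`-dimensional simplicial chains of `K`
(an `n`-simplex has `n + 1` vertices). -/
noncomputable def simpChains (K : Finset (Finset ℕ)) (n : ℕ) : Submodule ℤ (Finset ℕ →₀ ℤ) :=
  Submodule.span ℤ {x | ∃ s ∈ K, s.card = n + 1 ∧ x = Finsupp.single s 1}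

/-- The group of reduced `n`-cycles of `K`. -/
noncomputable def simpCycles (K : Finset (Finset ℕ)) (n : ℕ) : Submodule ℤ (Finset ℕ →₀ ℤ) :=
  simpChains K n ⊓ LinearMap.ker simpBnd

/-- The group of `n`-boundaries of `K`. -/
noncomputable def simpBoundaries (K : Finset (Finset ℕ)) (n : ℕ) : Submodule ℤ (Finset ℕ →₀ ℤ) :=
  (simpChains K (n + 1)).map simpBnd

/-- Reduced simplicial homology with integer coefficients of `K` in degree `n`. -/
abbrev reducedHomology (K : Finset (Finset ℕ)) (n : ℕ) :=
  ↥(simpCycles K n) ⧸ (simpBoundaries K n).comap (simpCycles K n).subtype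

/-- `K` is a (finite, abstract) simplicial complex: its members are nonempty finite sets
and it is closed under taking nonempty subsets (faces). -/
def IsComplex (K : Finset (Finset ℕ)) : Prop :=
  ∀ s ∈ K, s.Nonempty ∧ ∀ t, t ⊆ s → t.Nonempty → t ∈ K

/-- `K` is acyclic: it is nonempty and all of its reduced homology groups vanish. -/
def IsAcyclic (K : Finset (Finset ℕ)) : Prop :=
  K.Nonempty ∧ ∀ n, Subsingleton (reducedHomology K n)

/-- The closure of a simplex `V`: the simplicial complex consisting of `V` and
all of its (nonempty) faces. -/
def simplexClosure (V : Finset ℕ) : Finset (Finset ℕ) := V.powerset.erase ∅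

open Classical in
/-- Delete the top-dimensional cell `V` from the complex `X`: the remaining subcomplex
consists exactly of those simplices of `X` that are faces of some simplex of `X` not
contained in `V`; i.e. `V` is removed and every face of `V` that is a face of some
remaining simplex is retained. -/
noncomputable def deleteTop (X : Finset (Finset ℕ)) (V : Finset ℕ) : Finset (Finset ℕ) :=
  X.filter fun s => ∃ t ∈ X, s ⊆ t ∧ ¬ t ⊆ V

/-- Iteratively delete a list of top-dimensional cells from the complex `K`. -/
noncomputable def deleteSeq (K : Finset (Finset ℕ)) : List (Finset ℕ) → Finset (Finset ℕ)
  | [] => K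
  | V :: rest => deleteSeq (deleteTop K V) rest

/-- `T` is a top-dimensional simplex of `K`: it belongs to `K` and has maximal dimension. -/
def IsTopCell (K : Finset (Finset ℕ)) (T : Finset ℕ) : Prop :=
  T ∈ K ∧ ∀ s ∈ K, s.card ≤ T.card

/-! Deleting a top cell `V` from `X` leaves a subcomplex `Y` with `X = Y ∪ closure V`. The closure
of a simplex is acyclic, since coning from its least vertex is a contracting chain homotopy. Hence,
when `Y ∩ closure V` is acyclic, the Mayer–Vietoris argument shows that the inclusion `Y ⊆ X`
induces an isomorphism on reduced homology. Distinct top cells of `K` remain top cells after a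
deletion, so these isomorphisms compose along the sequence. -/

open Finset

lemma Finsupp.supported_le_iff_single_mem {α R : Type*} [CommSemiring R] {S : Set α}
    {N : Submodule R (α →₀ R)} :
    Finsupp.supported R R S ≤ N ↔ ∀ a ∈ S, Finsupp.single a 1 ∈ N := by
  rw [Finsupp.supported_eq_span_single, Submodule.span_le, Set.image_subset_iff]
  rfl

namespace Submodule

variable {R M : Type*} [Ring R] [AddCommGroup M] [Module R M] {Z₁ Z₂ B₁ B₂ : Submodule R M}

noncomputable def subquotientMap (hZ : Z₁ ≤ Z₂) (hB : B₁ ≤ B₂) :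
    Z₁ ⧸ B₁.comap Z₁.subtype →ₗ[R] Z₂ ⧸ B₂.comap Z₂.subtype :=
  mapQ _ _ (inclusion hZ) fun _ hz => hB hz

lemma subquotientMap_surjective (hZ : Z₁ ≤ Z₂) (hB : B₁ ≤ B₂) (h : Z₂ ≤ Z₁ ⊔ B₂) :
    Function.Surjective (subquotientMap hZ hB) := by
  intro q
  obtain ⟨z, rfl⟩ := Quotient.mk_surjective _ q
  obtain ⟨y, hy, b, hb, hyb⟩ := mem_sup.mp (h z.2)
  refine ⟨Quotient.mk ⟨y, hy⟩, (Quotient.eq _).mpr ?_⟩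
  show y - (z : M) ∈ B₂
  rw [← hyb, sub_add_cancel_left]
  exact neg_mem hb

lemma subquotientMap_injective (hZ : Z₁ ≤ Z₂) (hB : B₁ ≤ B₂) (h : Z₁ ⊓ B₂ ≤ B₁) :
    Function.Injective (subquotientMap hZ hB) := by
  refine (injective_iff_map_eq_zero _).mpr fun q hq => ?_
  obtain ⟨y, rfl⟩ := Quotient.mk_surjective _ q
  rw [subquotientMap, mapQ_apply, Quotient.mk_eq_zero] at hq
  exact (Quotient.mk_eq_zero _).mpr (h ⟨y.2, hq⟩)

end Submodule

/-- `(-1) ^ i` when `v` is the `i`-th smallest vertex of `s`: the sign of the face `s.erase v`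
in `simplexBoundary s`. -/
def vertexSign (s : Finset ℕ) (v : ℕ) : ℤ := (-1) ^ #(s.filter (· < v))

lemma nthVertex_eq_orderEmbOfFin {s : Finset ℕ} {i : ℕ} (hi : i < s.card) :
    nthVertex s i = s.orderEmbOfFin rfl ⟨i, hi⟩ := by
  rw [nthVertex, List.getD_eq_getElem _ _ (by simpa using hi), orderEmbOfFin_apply]
  rfl

lemma card_filter_lt_orderEmbOfFin (s : Finset ℕ) (i : Fin s.card) :
    #(s.filter (· < s.orderEmbOfFin rfl i)) = i := by
  set e := s.orderEmbOfFin rfl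
  have hfilter : s.filter (· < e i) = (Iio i).map e.toEmbedding := by
    ext w
    simp only [mem_filter, mem_map, mem_Iio, RelEmbedding.coe_toEmbedding]
    constructor
    · rintro ⟨hw, hlt⟩
      obtain ⟨j, rfl⟩ : w ∈ Set.range e := by rwa [range_orderEmbOfFin]
      exact ⟨j, e.lt_iff_lt.mp hlt, rfl⟩
    · rintro ⟨j, hj, rfl⟩
      exact ⟨orderEmbOfFin_mem s rfl j, e.lt_iff_lt.mpr hj⟩
  rw [hfilter, card_map, Fin.card_Iio]

lemma simplexBoundary_eq_sum (s : Finset ℕ) :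
    simplexBoundary s = ∑ v ∈ s, Finsupp.single (s.erase v) (vertexSign s v) := by
  refine sum_nbij' (nthVertex s) (fun v => #(s.filter (· < v))) ?_ ?_ ?_ ?_ ?_
  · intro i hi
    rw [nthVertex_eq_orderEmbOfFin (mem_range.mp hi)]
    exact orderEmbOfFin_mem s rfl _
  · intro v hv
    exact mem_range.mpr (card_lt_card (filter_ssubset.mpr ⟨v, hv, lt_irrefl v⟩))
  · intro i hi
    rw [nthVertex_eq_orderEmbOfFin (mem_range.mp hi), card_filter_lt_orderEmbOfFin]
  · intro v hv
    obtain ⟨j, rfl⟩ : v ∈ Set.range (s.orderEmbOfFin rfl) := by rwa [range_orderEmbOfFin]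
    simp only [card_filter_lt_orderEmbOfFin, nthVertex_eq_orderEmbOfFin j.2]
  · intro i hi
    rw [vertexSign, nthVertex_eq_orderEmbOfFin (mem_range.mp hi), card_filter_lt_orderEmbOfFin]

lemma simpBnd_single (s : Finset ℕ) (c : ℤ) :
    simpBnd (Finsupp.single s c) = c • simplexBoundary s := by
  simp [simpBnd, LinearMap.toSpanSingleton_apply]

lemma vertexSign_erase {s : Finset ℕ} {v : ℕ} (hv : v ∈ s) (w : ℕ) :
    vertexSign (s.erase v) w = if v < w then -vertexSign s w else vertexSign s w := by
  rw [vertexSign, vertexSign, filter_erase]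
  split_ifs with h
  · have hmem : v ∈ s.filter (· < w) := mem_filter.mpr ⟨hv, h⟩
    obtain ⟨n, hn⟩ := Nat.exists_eq_succ_of_ne_zero (card_pos.mpr ⟨v, hmem⟩).ne'
    rw [card_erase_of_mem hmem, hn, pow_succ]
    simp
  · rw [erase_eq_of_notMem (by simp [h])]

lemma vertexSign_mul_add_vertexSign_mul {s : Finset ℕ} {v w : ℕ} (hv : v ∈ s) (hw : w ∈ s)
    (hvw : v ≠ w) :
    vertexSign s v * vertexSign (s.erase v) w + vertexSign s w * vertexSign (s.erase w) v =
      0 := by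
  rw [vertexSign_erase hv, vertexSign_erase hw]
  rcases hvw.lt_or_gt with h | h <;> simp only [h, h.not_gt, if_true, if_false] <;> ring

lemma simpBnd_simplexBoundary (s : Finset ℕ) : simpBnd (simplexBoundary s) = 0 := by
  simp only [simplexBoundary_eq_sum, map_sum, simpBnd_single, Finset.smul_sum,
    Finsupp.smul_single, smul_eq_mul]
  rw [sum_sigma']
  have hmem : ∀ v w : ℕ, (⟨v, w⟩ : Σ _ : ℕ, ℕ) ∈ s.sigma (fun v => s.erase v) ↔
      v ∈ s ∧ w ∈ s ∧ w ≠ v := by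
    simp [and_comm]
  refine sum_involution (fun p _ => ⟨p.2, p.1⟩) ?_ ?_ ?_ ?_
  · rintro ⟨v, w⟩ hp
    obtain ⟨hv, hw, hwv⟩ := (hmem v w).mp hp
    rw [erase_right_comm, ← Finsupp.single_add,
      vertexSign_mul_add_vertexSign_mul hv hw hwv.symm, Finsupp.single_zero]
  · rintro ⟨v, w⟩ hp _ h
    exact ((hmem v w).mp hp).2.2 (congrArg Sigma.fst h)
  · rintro ⟨v, w⟩ hp
    obtain ⟨hv, hw, hwv⟩ := (hmem v w).mp hp
    exact (hmem w v).mpr ⟨hw, hv, hwv.symm⟩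
  · intro p _
    rfl

lemma simpBnd_simpBnd (x : Finset ℕ →₀ ℤ) : simpBnd (simpBnd x) = 0 := by
  suffices h : simpBnd ∘ₗ simpBnd = 0 from LinearMap.congr_fun h x
  refine Finsupp.lhom_ext fun s c => ?_
  rw [LinearMap.comp_apply, simpBnd_single, map_smul, simpBnd_simplexBoundary, smul_zero,
    LinearMap.zero_apply]

/-- `k` counts vertices; the empty simplex in degree `0` makes this the augmented chain complex,
whose homology is reduced homology. -/
def augChains (W : Finset (Finset ℕ)) (k : ℕ) : Submodule ℤ (Finset ℕ →₀ ℤ) :=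
  Finsupp.supported ℤ ℤ {s | s ∈ insert ∅ W ∧ s.card = k}

lemma augChains_mono {W₁ W₂ : Finset (Finset ℕ)} (h : W₁ ⊆ W₂) (k : ℕ) :
    augChains W₁ k ≤ augChains W₂ k :=
  Finsupp.supported_mono fun _ hs => ⟨insert_subset_insert ∅ h hs.1, hs.2⟩

lemma augChains_inter (W₁ W₂ : Finset (Finset ℕ)) (k : ℕ) :
    augChains (W₁ ∩ W₂) k = augChains W₁ k ⊓ augChains W₂ k := by
  rw [augChains, augChains, augChains, ← Finsupp.supported_inter]
  congr 1
  ext s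
  simp only [Set.mem_ofPred_eq, Set.mem_inter_iff, insert_inter_distrib, mem_inter]
  tauto

lemma augChains_union (W₁ W₂ : Finset (Finset ℕ)) (k : ℕ) :
    augChains (W₁ ∪ W₂) k = augChains W₁ k ⊔ augChains W₂ k := by
  rw [augChains, augChains, augChains, ← Finsupp.supported_union]
  congr 1
  ext s
  simp only [Set.mem_ofPred_eq, Set.mem_union, insert_union_distrib, mem_union]
  tauto

lemma simpChains_eq_augChains (W : Finset (Finset ℕ)) (n : ℕ) :
    simpChains W n = augChains W (n + 1) := by
  rw [augChains, Finsupp.supported_eq_span_single, simpChains]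
  congr 1
  ext x
  simp only [Set.mem_ofPred_eq, Set.mem_image, mem_insert]
  constructor
  · rintro ⟨s, hs, hc, rfl⟩
    exact ⟨s, ⟨Or.inr hs, hc⟩, rfl⟩
  · rintro ⟨s, ⟨rfl | hs, hc⟩, rfl⟩
    · simp at hc
    · exact ⟨s, hs, hc, rfl⟩

lemma erase_mem_insert_empty {W : Finset (Finset ℕ)} (hW : IsComplex W) {s : Finset ℕ}
    (hs : s ∈ W) (v : ℕ) : s.erase v ∈ insert ∅ W := by
  rcases (s.erase v).eq_empty_or_nonempty with h | h
  · exact h ▸ mem_insert_self ∅ W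
  · exact mem_insert_of_mem ((hW s hs).2 _ (erase_subset v s) h)

lemma simpBnd_mem_augChains {W : Finset (Finset ℕ)} (hW : IsComplex W) {k : ℕ}
    {x : Finset ℕ →₀ ℤ} (hx : x ∈ augChains W (k + 1)) : simpBnd x ∈ augChains W k := by
  suffices h : augChains W (k + 1) ≤ (augChains W k).comap simpBnd from h hx
  refine Finsupp.supported_le_iff_single_mem.mpr fun s ⟨hs, hcard⟩ => ?_
  have hsW : s ∈ W := (mem_insert.mp hs).resolve_left (by rintro rfl; simp at hcard)
  rw [Submodule.mem_comap, simpBnd_single, one_smul, simplexBoundary_eq_sum]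
  refine Submodule.sum_mem _ fun v hv => Finsupp.single_mem_supported ℤ _ ⟨?_, ?_⟩
  · exact erase_mem_insert_empty hW hsW v
  · rw [card_erase_of_mem hv, hcard, Nat.add_sub_cancel]

def IsChainAcyclic (W : Finset (Finset ℕ)) : Prop :=
  ∀ k, augChains W k ⊓ LinearMap.ker simpBnd ≤ (augChains W (k + 1)).map simpBnd

noncomputable def cone (v : ℕ) : (Finset ℕ →₀ ℤ) →ₗ[ℤ] (Finset ℕ →₀ ℤ) :=
  Finsupp.lsum ℤ fun s =>
    LinearMap.toSpanSingleton ℤ _ (if v ∈ s then 0 else Finsupp.single (insert v s) 1)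

lemma cone_single (v : ℕ) (s : Finset ℕ) (c : ℤ) :
    cone v (Finsupp.single s c) = if v ∈ s then 0 else Finsupp.single (insert v s) c := by
  split_ifs <;> simp [cone, LinearMap.toSpanSingleton_apply, *]

lemma vertexSign_of_forall_le {s : Finset ℕ} {v : ℕ} (h : ∀ w ∈ s, v ≤ w) :
    vertexSign s v = 1 := by
  rw [vertexSign, filter_false_of_mem fun w hw => (h w hw).not_gt, card_empty, pow_zero]

lemma vertexSign_insert_of_lt {s : Finset ℕ} {v w : ℕ} (hv : v ∉ s) (h : v < w) :
    vertexSign (insert v s) w = -vertexSign s w := by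
  have := vertexSign_erase (mem_insert_self v s) w
  rw [erase_insert hv, if_pos h] at this
  rw [this, neg_neg]

lemma simpBnd_cone_add_cone_simpBnd_single {v : ℕ} {s : Finset ℕ} (h : ∀ w ∈ s, v ≤ w) :
    simpBnd (cone v (Finsupp.single s 1)) + cone v (simpBnd (Finsupp.single s 1)) =
      Finsupp.single s 1 := by
  simp only [simpBnd_single, one_smul, simplexBoundary_eq_sum, map_sum, cone_single]
  by_cases hv : v ∈ s
  · rw [if_pos hv, map_zero, zero_add, Finset.sum_eq_single v, if_neg (notMem_erase v s),
      insert_erase hv, vertexSign_of_forall_le h]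
    · intro w _ hwv
      rw [if_pos (mem_erase.mpr ⟨hwv.symm, hv⟩)]
    · exact fun hv' => (hv' hv).elim
  · have hvw : ∀ w ∈ s, v < w := fun w hw =>
      (h w hw).lt_of_ne (ne_of_mem_of_not_mem hw hv).symm
    rw [if_neg hv, simpBnd_single, one_smul, simplexBoundary_eq_sum, sum_insert hv,
      erase_insert hv, vertexSign_of_forall_le (by simpa using h), add_assoc, ← sum_add_distrib]
    refine add_eq_left.mpr (sum_eq_zero fun w hw => ?_)
    rw [if_neg fun hv' => hv (mem_of_mem_erase hv'), erase_insert_of_ne (hvw w hw).ne,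
      vertexSign_insert_of_lt hv (hvw w hw), ← Finsupp.single_add, neg_add_cancel,
      Finsupp.single_zero]

lemma simpBnd_cone_add_cone_simpBnd {v : ℕ} {x : Finset ℕ →₀ ℤ}
    (hx : x ∈ Finsupp.supported ℤ ℤ {s | ∀ w ∈ s, v ≤ w}) :
    simpBnd (cone v x) + cone v (simpBnd x) = x := by
  suffices h : Finsupp.supported ℤ ℤ {s | ∀ w ∈ s, v ≤ w} ≤
      LinearMap.eqLocus (simpBnd ∘ₗ cone v + cone v ∘ₗ simpBnd) LinearMap.id from h hx
  exact Finsupp.supported_le_iff_single_mem.mpr fun s hs =>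
    simpBnd_cone_add_cone_simpBnd_single hs

lemma insert_empty_simplexClosure (V : Finset ℕ) : insert ∅ (simplexClosure V) = V.powerset :=
  insert_erase (empty_mem_powerset V)

lemma cone_mem_augChains_simplexClosure {V : Finset ℕ} {v : ℕ} (hv : v ∈ V) {k : ℕ}
    {x : Finset ℕ →₀ ℤ} (hx : x ∈ augChains (simplexClosure V) k) :
    cone v x ∈ augChains (simplexClosure V) (k + 1) := by
  suffices h : augChains (simplexClosure V) k ≤
      (augChains (simplexClosure V) (k + 1)).comap (cone v) from h hx
  refine Finsupp.supported_le_iff_single_mem.mpr fun s ⟨hs, hcard⟩ => ?_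
  rw [insert_empty_simplexClosure, mem_powerset] at hs
  rw [Submodule.mem_comap, cone_single]
  split_ifs with hvs
  · exact zero_mem _
  · refine Finsupp.single_mem_supported ℤ _ ⟨?_, ?_⟩
    · rw [insert_empty_simplexClosure, mem_powerset]
      exact insert_subset hv hs
    · rw [card_insert_of_notMem hvs, hcard]

lemma isChainAcyclic_simplexClosure {V : Finset ℕ} (hV : V.Nonempty) :
    IsChainAcyclic (simplexClosure V) := by
  rintro k x ⟨hx, hz⟩
  have hsupp : x ∈ Finsupp.supported ℤ ℤ {s | ∀ w ∈ s, V.min' hV ≤ w} := by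
    refine Finsupp.supported_mono (fun s ⟨hs, _⟩ w hw => ?_) hx
    rw [insert_empty_simplexClosure, mem_powerset] at hs
    exact V.min'_le w (hs hw)
  refine ⟨cone (V.min' hV) x, cone_mem_augChains_simplexClosure (V.min'_mem hV) hx, ?_⟩
  rw [← add_zero (simpBnd _), ← map_zero (cone (V.min' hV)), ← LinearMap.mem_ker.mp hz]
  exact simpBnd_cone_add_cone_simpBnd hsupp

lemma IsAcyclic.isChainAcyclic {W : Finset (Finset ℕ)} (hW : IsComplex W) (h : IsAcyclic W) :
    IsChainAcyclic W := by
  rintro (_ | n) x ⟨hx, hz⟩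
  · obtain ⟨s, hs⟩ := h.1
    obtain ⟨u, hu⟩ := (hW s hs).1
    have hx0 : x = Finsupp.single ∅ (x ∅) := by
      refine Finsupp.support_subset_singleton.mp fun t ht => ?_
      simpa using ((Finsupp.mem_supported ℤ x).mp hx ht).2
    have hu : {u} ∈ W := (hW s hs).2 {u} (singleton_subset_iff.mpr hu) (singleton_nonempty u)
    refine ⟨Finsupp.single {u} (x ∅), ?_, ?_⟩
    · exact Finsupp.single_mem_supported ℤ _ ⟨mem_insert_of_mem hu, card_singleton u⟩
    · rw [simpBnd_single, simplexBoundary_eq_sum, sum_singleton, erase_singleton,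
        vertexSign_of_forall_le (by simp), Finsupp.smul_single_one, ← hx0]
  · have hcyc : x ∈ simpCycles W n := ⟨(simpChains_eq_augChains W n).symm ▸ hx, hz⟩
    have := h.2 n
    have hbd := (Submodule.Quotient.mk_eq_zero _).mp
      (Subsingleton.elim (Submodule.Quotient.mk ⟨x, hcyc⟩ : reducedHomology W n) 0)
    rwa [Submodule.mem_comap, simpBoundaries, simpChains_eq_augChains] at hbd

lemma simpCycles_mono {W₁ W₂ : Finset (Finset ℕ)} (h : W₁ ⊆ W₂) (m : ℕ) :
    simpCycles W₁ m ≤ simpCycles W₂ m := by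
  unfold simpCycles
  rw [simpChains_eq_augChains, simpChains_eq_augChains]
  exact inf_le_inf_right _ (augChains_mono h _)

lemma simpBoundaries_mono {W₁ W₂ : Finset (Finset ℕ)} (h : W₁ ⊆ W₂) (m : ℕ) :
    simpBoundaries W₁ m ≤ simpBoundaries W₂ m := by
  unfold simpBoundaries
  rw [simpChains_eq_augChains, simpChains_eq_augChains]
  exact Submodule.map_mono (augChains_mono h _)

section MayerVietoris

variable {Y A : Finset (Finset ℕ)}

lemma simpCycles_union_le (hY : IsComplex Y) (hA : IsComplex A) (hAc : IsChainAcyclic A)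
    (hYA : IsChainAcyclic (Y ∩ A)) (m : ℕ) :
    simpCycles (Y ∪ A) m ≤ simpCycles Y m ⊔ simpBoundaries (Y ∪ A) m := by
  rintro z ⟨hz, hdz⟩
  rw [simpChains_eq_augChains, augChains_union] at hz
  obtain ⟨y, hy, a, ha, rfl⟩ := Submodule.mem_sup.mp hz
  have hda : simpBnd a = -simpBnd y :=
    eq_neg_of_add_eq_zero_right (by rw [← map_add, LinearMap.mem_ker.mp hdz])
  have hdaYA : simpBnd a ∈ augChains (Y ∩ A) m := by
    rw [augChains_inter]
    refine ⟨?_, simpBnd_mem_augChains hA ha⟩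
    rw [hda]
    exact neg_mem (simpBnd_mem_augChains hY hy)
  obtain ⟨a', ha', hda'⟩ := hYA m ⟨hdaYA, simpBnd_simpBnd a⟩
  rw [augChains_inter] at ha'
  obtain ⟨b, hb, hdb⟩ :=
    hAc (m + 1) ⟨sub_mem ha ha'.2, LinearMap.mem_ker.mpr (by rw [map_sub, hda', sub_self])⟩
  refine Submodule.mem_sup.mpr ⟨y + a', ⟨?_, ?_⟩, simpBnd b, ?_, by rw [hdb]; abel⟩
  · rw [simpChains_eq_augChains]
    exact add_mem hy ha'.1
  · exact LinearMap.mem_ker.mpr (by rw [map_add, hda', ← map_add, LinearMap.mem_ker.mp hdz])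
  · rw [simpBoundaries, simpChains_eq_augChains, augChains_union]
    exact ⟨b, Submodule.mem_sup_right hb, rfl⟩

lemma simpCycles_inf_simpBoundaries_union_le (hY : IsComplex Y) (hA : IsComplex A)
    (hYA : IsChainAcyclic (Y ∩ A)) (m : ℕ) :
    simpCycles Y m ⊓ simpBoundaries (Y ∪ A) m ≤ simpBoundaries Y m := by
  rintro w ⟨⟨hw, -⟩, c, hc, rfl⟩
  rw [simpChains_eq_augChains] at hw
  rw [simpChains_eq_augChains, augChains_union] at hc
  obtain ⟨cy, hcy, a, ha, rfl⟩ := Submodule.mem_sup.mp hc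
  have hdaYA : simpBnd a ∈ augChains (Y ∩ A) (m + 1) := by
    rw [augChains_inter]
    refine ⟨?_, simpBnd_mem_augChains hA ha⟩
    rw [← add_sub_cancel_left (simpBnd cy) (simpBnd a), ← map_add]
    exact sub_mem hw (simpBnd_mem_augChains hY hcy)
  obtain ⟨a', ha', hda'⟩ := hYA (m + 1) ⟨hdaYA, simpBnd_simpBnd a⟩
  rw [augChains_inter] at ha'
  refine ⟨cy + a', ?_, by rw [map_add, map_add, hda']⟩
  rw [simpChains_eq_augChains]
  exact add_mem hcy ha'.1

theorem nonempty_reducedHomology_equiv_union (hY : IsComplex Y) (hA : IsComplex A)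
    (hAc : IsChainAcyclic A) (hYA : IsChainAcyclic (Y ∩ A)) (m : ℕ) :
    Nonempty (reducedHomology Y m ≃ₗ[ℤ] reducedHomology (Y ∪ A) m) :=
  have hZ := simpCycles_mono subset_union_left m
  have hB := simpBoundaries_mono subset_union_left m
  ⟨.ofBijective (Submodule.subquotientMap hZ hB)
    ⟨Submodule.subquotientMap_injective hZ hB (simpCycles_inf_simpBoundaries_union_le hY hA hYA m),
      Submodule.subquotientMap_surjective hZ hB (simpCycles_union_le hY hA hAc hYA m)⟩⟩

end MayerVietoris

lemma mem_deleteTop {X : Finset (Finset ℕ)} {V s : Finset ℕ} :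
    s ∈ deleteTop X V ↔ s ∈ X ∧ ∃ t ∈ X, s ⊆ t ∧ ¬t ⊆ V := by
  simp [deleteTop]

lemma deleteTop_subset (X : Finset (Finset ℕ)) (V : Finset ℕ) : deleteTop X V ⊆ X :=
  filter_subset _ _

lemma mem_simplexClosure {V s : Finset ℕ} : s ∈ simplexClosure V ↔ s ⊆ V ∧ s.Nonempty := by
  rw [simplexClosure, mem_erase, mem_powerset, nonempty_iff_ne_empty, and_comm]

lemma IsComplex.deleteTop {X : Finset (Finset ℕ)} (hX : IsComplex X) (V : Finset ℕ) :
    IsComplex (deleteTop X V) := by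
  intro s hs
  obtain ⟨hsX, t, htX, hst, htV⟩ := mem_deleteTop.mp hs
  exact ⟨(hX s hsX).1, fun u hus hu =>
    mem_deleteTop.mpr ⟨(hX s hsX).2 u hus hu, t, htX, hus.trans hst, htV⟩⟩

lemma isComplex_simplexClosure (V : Finset ℕ) : IsComplex (simplexClosure V) := by
  intro s hs
  rw [mem_simplexClosure] at hs
  exact ⟨hs.2, fun t hts ht => mem_simplexClosure.mpr ⟨hts.trans hs.1, ht⟩⟩

lemma IsComplex.inter {X₁ X₂ : Finset (Finset ℕ)} (h₁ : IsComplex X₁) (h₂ : IsComplex X₂) :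
    IsComplex (X₁ ∩ X₂) := by
  intro s hs
  rw [mem_inter] at hs
  exact ⟨(h₁ s hs.1).1, fun t hts ht =>
    mem_inter.mpr ⟨(h₁ s hs.1).2 t hts ht, (h₂ s hs.2).2 t hts ht⟩⟩

lemma deleteTop_union_simplexClosure {X : Finset (Finset ℕ)} (hX : IsComplex X) {V : Finset ℕ}
    (hV : V ∈ X) : deleteTop X V ∪ simplexClosure V = X := by
  refine Subset.antisymm (union_subset (deleteTop_subset X V) fun s hs => ?_) fun s hs => ?_
  · rw [mem_simplexClosure] at hs
    exact (hX V hV).2 s hs.1 hs.2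
  · by_cases hsV : s ⊆ V
    · exact mem_union_right _ (mem_simplexClosure.mpr ⟨hsV, (hX s hs).1⟩)
    · exact mem_union_left _ (mem_deleteTop.mpr ⟨hs, s, hs, subset_rfl, hsV⟩)

theorem nonempty_reducedHomology_deleteTop_equiv {X : Finset (Finset ℕ)} (hX : IsComplex X)
    {V : Finset ℕ} (hV : V ∈ X) (hacyc : IsAcyclic (deleteTop X V ∩ simplexClosure V)) (m : ℕ) :
    Nonempty (reducedHomology (deleteTop X V) m ≃ₗ[ℤ] reducedHomology X m) := by
  have hY := hX.deleteTop V
  have hA := isComplex_simplexClosure V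
  have := nonempty_reducedHomology_equiv_union hY hA
    (isChainAcyclic_simplexClosure (hX V hV).1) (hacyc.isChainAcyclic (hY.inter hA)) m
  rwa [deleteTop_union_simplexClosure hX hV] at this

lemma IsTopCell.deleteTop {K : Finset (Finset ℕ)} {V W : Finset ℕ} (hW : IsTopCell K W)
    (hV : IsTopCell K V) (hWV : W ≠ V) : IsTopCell (deleteTop K V) W := by
  have hWV' : ¬W ⊆ V := fun h => hWV (eq_of_subset_of_card_le h (hW.2 V hV.1))
  exact ⟨mem_deleteTop.mpr ⟨hW.1, W, hW.1, subset_rfl, hWV'⟩,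
    fun s hs => hW.2 s (deleteTop_subset K V hs)⟩

theorem nonempty_reducedHomology_deleteSeq_equiv :
    ∀ (T : List (Finset ℕ)) (K : Finset (Finset ℕ)), IsComplex K → T.Nodup →
      (∀ V ∈ T, IsTopCell K V) →
      (∀ i : Fin T.length,
        IsAcyclic (deleteSeq K (T.take (↑i + 1)) ∩ simplexClosure (T.get i))) →
      ∀ m, Nonempty (reducedHomology (deleteSeq K T) m ≃ₗ[ℤ] reducedHomology K m)
  | [], _, _, _, _, _, _ => ⟨LinearEquiv.refl ℤ _⟩
  | V :: T, K, hK, hnodup, htop, hacyc, m => by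
    obtain ⟨hVT, hT⟩ := List.nodup_cons.mp hnodup
    have hV := htop V List.mem_cons_self
    obtain ⟨e⟩ := nonempty_reducedHomology_deleteSeq_equiv T (deleteTop K V) (hK.deleteTop V) hT
      (fun W hW => (htop W (List.mem_cons_of_mem V hW)).deleteTop hV (ne_of_mem_of_not_mem hW hVT))
      (fun i => hacyc i.succ) m
    obtain ⟨e'⟩ := nonempty_reducedHomology_deleteTop_equiv hK hV.1 (hacyc 0) m
    exact ⟨e.trans e'⟩

/-- Let `K` be a finite simplicial complex and `T = [T₁, …, Tₙ]` a
sequence of (distinct) top-dimensional simplices of `K`.  Let `Kᵢ = deleteSeq K (T.take i)`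
be the subcomplex obtained from `K` by deleting `T₁, …, Tᵢ` (retaining every face of a
deleted simplex that is a face of some remaining simplex).  If for every `i` the
subcomplex `Kᵢ ∩ closure Tᵢ` is acyclic, then for every degree `m` the reduced homology
groups of `Kₙ = deleteSeq K T` and of `K` are isomorphic. -/
theorem thinning_preserves_homology
    (K : Finset (Finset ℕ)) (hK : IsComplex K)
    (T : List (Finset ℕ)) (hnodup : T.Nodup)
    (htop : ∀ i : Fin T.length, IsTopCell K (T.get i))
    (hacyc : ∀ i : Fin T.length,
      IsAcyclic (deleteSeq K (T.take (↑i + 1)) ∩ simplexClosure (T.get i)))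
    (m : ℕ) :
    Nonempty (reducedHomology (deleteSeq K T) m ≃ₗ[ℤ] reducedHomology K m) :=
  nonempty_reducedHomology_deleteSeq_equiv T K hK hnodup
    (fun _ hV => by obtain ⟨i, rfl⟩ := List.get_of_mem hV; exact htop i) hacyc m
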